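/- Let N≥2, let λ_1,…,λ_N>0 satisfy λ_N > max_{1≤i≤N−1} λ_i, and let w_i:ℕ→(0,∞) satisfy w_i(n+1)/w_i(n) → 1 as n→∞ for each i. For K∈ℕ let μ^K be the probability measure on {η∈ℕ^N : ∑_i η_i = K} with μ^K(η) proportional to ∏_{i=1}^N w_i(η_i) λ_i^{η_i}. Then for every δ∈(0,1), μ^K(η_N ≤ (1−δ)K) → 0 as K→∞; moreover, for any random variables η^K with law μ^K on a common probability space, η^K_N/K → 1 almost surely. -/

import Mathlib

/-!
Write `j` for the site with the largest rate and choose `β > 0` with `λ_i ≤ e^{-β} λ_j` for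
`i ≠ j`. Subexponentiality gives `c e^{-αn} ≤ w_i(n) ≤ C e^{αn}` for any `α > 0`. Putting all `K`
particles on `j` shows `Z(K) ≥ c' e^{-αK} λ_j^K`, while a configuration with `η_j ≤ (1-δ)K` has
at least `δK` particles elsewhere, so its weight is at most `C' e^{αK} λ_j^K e^{-βδK}`; there are
at most `(K+1)^N` such configurations. For `α = βδ/4` this bounds `μ^K(η_j ≤ (1-δ)K)` by
`A (K+1)^N e^{-βδK/2}`, which tends to zero and is summable in `K`, so Borel–Cantelli yields the
almost sure statement.
-/

open Filter Topology MeasureTheory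

section Subexponential

variable {u : ℕ → ℝ}

theorem exists_le_mul_exp_of_tendsto_ratio_one (hu : ∀ n, 0 < u n)
    (h : Tendsto (fun n => u (n + 1) / u n) atTop (𝓝 1)) {α : ℝ} (hα : 0 < α) :
    ∃ C, 0 < C ∧ ∀ n : ℕ, u n ≤ C * Real.exp (α * n) := by
  -- `u n e^{-αn}` passes the ratio test with ratio `e^{-α} < 1`, so it is summable, hence bounded.
  set g : ℕ → ℝ := fun n => u n * Real.exp (-(α * n))
  have hg : ∀ n, 0 < g n := fun n => mul_pos (hu n) (Real.exp_pos _)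
  have hratio : Tendsto (fun n => ‖g (n + 1)‖ / ‖g n‖) atTop (𝓝 (1 * Real.exp (-α))) := by
    refine (h.mul_const _).congr fun n => ?_
    rw [Real.norm_of_nonneg (hg _).le, Real.norm_of_nonneg (hg _).le]
    simp only [g, Nat.cast_succ, mul_add, mul_one, neg_add, Real.exp_add]
    field_simp
  have hg_summable : Summable g := summable_of_ratio_test_tendsto_lt_one
    (by simpa using hα) (Eventually.of_forall fun n => (hg n).ne') hratio
  obtain ⟨C, hC⟩ := hg_summable.tendsto_atTop_zero.bddAbove_range
  have hgC : ∀ n, g n ≤ C := fun n => hC ⟨n, rfl⟩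
  refine ⟨C, (hg 0).trans_le (hgC 0), fun n => ?_⟩
  calc u n = g n * Real.exp (α * n) := by simp [g, mul_assoc, ← Real.exp_add]
    _ ≤ C * Real.exp (α * n) := by gcongr; exact hgC n

theorem exists_mul_exp_neg_le_of_tendsto_ratio_one (hu : ∀ n, 0 < u n)
    (h : Tendsto (fun n => u (n + 1) / u n) atTop (𝓝 1)) {α : ℝ} (hα : 0 < α) :
    ∃ c, 0 < c ∧ ∀ n : ℕ, c * Real.exp (-(α * n)) ≤ u n := by
  have h_inv : Tendsto (fun n => (u (n + 1))⁻¹ / (u n)⁻¹) atTop (𝓝 1) := by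
    refine inv_one (G := ℝ) ▸ (h.inv₀ one_ne_zero).congr fun n => ?_
    rw [inv_div, inv_div_inv]
  obtain ⟨C, hC, hle⟩ :=
    exists_le_mul_exp_of_tendsto_ratio_one (fun n => inv_pos.2 (hu n)) h_inv hα
  refine ⟨C⁻¹, inv_pos.2 hC, fun n => ?_⟩
  rw [Real.exp_neg, ← mul_inv, inv_le_comm₀ (by positivity) (hu n)]
  exact hle n

end Subexponential

theorem exists_le_exp_neg_mul {ι : Type*} [Finite ι] {lam : ι → ℝ} {j : ι} (hj_pos : 0 < lam j)
    (hj : ∀ i ≠ j, lam i < lam j) : ∃ β, 0 < β ∧ ∀ i ≠ j, lam i ≤ Real.exp (-β) * lam j := by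
  classical
  have : Nonempty ι := ⟨j⟩
  obtain ⟨i₀, hi₀⟩ := Finite.exists_max fun i => if i = j then 0 else lam i / lam j
  set ρ := max (if i₀ = j then 0 else lam i₀ / lam j) (1 / 2)
  have hρ_pos : 0 < ρ := lt_max_of_lt_right one_half_pos
  have hρ_lt : ρ < 1 := by
    refine max_lt ?_ one_half_lt_one
    split_ifs with h
    · exact one_pos
    · exact (div_lt_one hj_pos).2 (hj i₀ h)
  refine ⟨-Real.log ρ, neg_pos.2 (Real.log_neg hρ_pos hρ_lt), fun i hi => ?_⟩
  rw [neg_neg, Real.exp_log hρ_pos, ← div_le_iff₀ hj_pos]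
  exact (if_neg hi ▸ hi₀ i).trans (le_max_left _ _)

section Configurations

variable {ι : Type*} [Fintype ι]

theorem le_of_sum_eq {ξ : ι → ℕ} {K : ℕ} (hξ : ∑ i, ξ i = K) (j : ι) : ξ j ≤ K :=
  hξ ▸ Finset.single_le_sum (fun _ _ => Nat.zero_le _) (Finset.mem_univ j)

theorem exists_injective_fin_of_sum_eq {P : (ι → ℕ) → Prop} {K : ℕ}
    (hP : ∀ ξ, P ξ → ∑ i, ξ i = K) :
    ∃ f : {ξ // P ξ} → ι → Fin (K + 1), Function.Injective f :=
  ⟨fun ξ i => ⟨ξ.1 i, Nat.lt_succ_of_le (le_of_sum_eq (hP ξ.1 ξ.2) i)⟩,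
    fun _ _ h => Subtype.ext (funext fun i => congrArg Fin.val (congrFun h i))⟩

theorem finite_of_sum_eq {P : (ι → ℕ) → Prop} {K : ℕ} (hP : ∀ ξ, P ξ → ∑ i, ξ i = K) :
    Finite {ξ // P ξ} :=
  have ⟨_, hf⟩ := exists_injective_fin_of_sum_eq hP
  Finite.of_injective _ hf

theorem natCard_le_of_sum_eq {P : (ι → ℕ) → Prop} {K : ℕ} (hP : ∀ ξ, P ξ → ∑ i, ξ i = K) :
    Nat.card {ξ // P ξ} ≤ (K + 1) ^ Fintype.card ι := by
  obtain ⟨f, hf⟩ := exists_injective_fin_of_sum_eq hP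
  simpa [Nat.card_fun] using Nat.card_le_card_of_injective f hf

instance (K : ℕ) : Finite {ξ : ι → ℕ // ∑ i, ξ i = K} := finite_of_sum_eq fun _ h => h

instance (K : ℕ) (A : Set (ι → ℕ)) : Finite {ξ : ι → ℕ // ∑ i, ξ i = K ∧ ξ ∈ A} :=
  finite_of_sum_eq fun _ h => h.1

theorem tsum_le_natCard_mul {α : Type*} [Finite α] {f : α → ℝ} {b : ℝ} (h : ∀ a, f a ≤ b) :
    ∑' a, f a ≤ Nat.card α * b := by
  cases nonempty_fintype α
  rw [tsum_fintype, Nat.card_eq_fintype_card, ← nsmul_eq_mul]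
  exact Finset.sum_le_card_nsmul _ _ _ fun a _ => h a

variable (w : ι → ℕ → ℝ) (lam : ι → ℝ)

noncomputable def configWeight (ξ : ι → ℕ) : ℝ := ∏ i, w i (ξ i) * lam i ^ ξ i

noncomputable def partitionFn (K : ℕ) : ℝ :=
  ∑' ξ : {ξ : ι → ℕ // ∑ i, ξ i = K}, configWeight w lam ξ

noncomputable def partitionFnOn (K : ℕ) (A : Set (ι → ℕ)) : ℝ :=
  ∑' ξ : {ξ : ι → ℕ // ∑ i, ξ i = K ∧ ξ ∈ A}, configWeight w lam ξ

variable {w lam}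

theorem configWeight_nonneg (hw : ∀ i n, 0 ≤ w i n) (hlam : ∀ i, 0 ≤ lam i) (ξ : ι → ℕ) :
    0 ≤ configWeight w lam ξ :=
  Finset.prod_nonneg fun i _ => mul_nonneg (hw i _) (pow_nonneg (hlam i) _)

theorem configWeight_le_partitionFn (hw : ∀ i n, 0 ≤ w i n) (hlam : ∀ i, 0 ≤ lam i)
    {ξ : ι → ℕ} {K : ℕ} (hξ : ∑ i, ξ i = K) : configWeight w lam ξ ≤ partitionFn w lam K :=
  Summable.of_finite.le_tsum (f := fun ξ : {ξ : ι → ℕ // ∑ i, ξ i = K} => configWeight w lam ξ)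
    ⟨ξ, hξ⟩ fun ζ _ => configWeight_nonneg hw hlam ζ

theorem configWeight_pi_single [DecidableEq ι] (j : ι) (K : ℕ) :
    configWeight w lam (Pi.single j K) = w j K * lam j ^ K * ∏ i ∈ Finset.univ.erase j, w i 0 := by
  rw [configWeight, ← Finset.mul_prod_erase _ _ (Finset.mem_univ j)]
  congr 1
  · simp
  · refine Finset.prod_congr rfl fun i hi => ?_
    simp [Pi.single_eq_of_ne (Finset.ne_of_mem_erase hi)]

theorem prod_le_prod_mul_exp {C : ι → ℝ} {α : ℝ} (hw : ∀ i n, 0 ≤ w i n)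
    (hC : ∀ i n, w i n ≤ C i * Real.exp (α * n)) (ξ : ι → ℕ) :
    ∏ i, w i (ξ i) ≤ (∏ i, C i) * Real.exp (α * ∑ i, ξ i) := by
  calc ∏ i, w i (ξ i) ≤ ∏ i, C i * Real.exp (α * ξ i) :=
        Finset.prod_le_prod (fun i _ => hw i _) fun i _ => hC i _
    _ = (∏ i, C i) * Real.exp (α * ∑ i, ξ i) := by
        rw [Finset.prod_mul_distrib, ← Real.exp_sum, ← Finset.mul_sum, Nat.cast_sum]

theorem prod_pow_le_pow_mul_pow [DecidableEq ι] {j : ι} {ρ : ℝ} (hlam : ∀ i, 0 ≤ lam i)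
    (hρ : ∀ i ≠ j, lam i ≤ ρ * lam j) (ξ : ι → ℕ) :
    ∏ i, lam i ^ ξ i ≤ lam j ^ (∑ i, ξ i) * ρ ^ (∑ i ∈ Finset.univ.erase j, ξ i) := by
  calc ∏ i, lam i ^ ξ i = lam j ^ ξ j * ∏ i ∈ Finset.univ.erase j, lam i ^ ξ i :=
        (Finset.mul_prod_erase _ _ (Finset.mem_univ j)).symm
    _ ≤ lam j ^ ξ j * ∏ i ∈ Finset.univ.erase j, (ρ * lam j) ^ ξ i := by
        refine mul_le_mul_of_nonneg_left (Finset.prod_le_prod (fun i _ => pow_nonneg (hlam i) _)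
          fun i hi => ?_) (pow_nonneg (hlam j) _)
        exact pow_le_pow_left₀ (hlam i) (hρ i (Finset.ne_of_mem_erase hi)) _
    _ = lam j ^ (∑ i, ξ i) * ρ ^ (∑ i ∈ Finset.univ.erase j, ξ i) := by
        rw [Finset.prod_pow_eq_pow_sum, ← Finset.add_sum_erase _ _ (Finset.mem_univ j)]
        ring

end Configurations

section Condensation

variable {ι : Type*} [Fintype ι] [DecidableEq ι] {w : ι → ℕ → ℝ} {lam : ι → ℝ} {j : ι}

theorem le_partitionFn (hw : ∀ i n, 0 < w i n) (hlam : ∀ i, 0 < lam i) {c α : ℝ}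
    (hc : ∀ n : ℕ, c * Real.exp (-(α * n)) ≤ w j n) (K : ℕ) :
    c * Real.exp (-(α * K)) * lam j ^ K * ∏ i ∈ Finset.univ.erase j, w i 0
      ≤ partitionFn w lam K := by
  have h_single : ∑ i, (Pi.single j K : ι → ℕ) i = K := by simp
  calc c * Real.exp (-(α * K)) * lam j ^ K * ∏ i ∈ Finset.univ.erase j, w i 0
      ≤ w j K * lam j ^ K * ∏ i ∈ Finset.univ.erase j, w i 0 :=
        mul_le_mul_of_nonneg_right (mul_le_mul_of_nonneg_right (hc K) (pow_nonneg (hlam j).le _))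
          (Finset.prod_nonneg fun i _ => (hw i 0).le)
    _ = configWeight w lam (Pi.single j K) := (configWeight_pi_single j K).symm
    _ ≤ partitionFn w lam K :=
        configWeight_le_partitionFn (fun i n => (hw i n).le) (fun i => (hlam i).le) h_single

theorem configWeight_le_of_apply_le (hw : ∀ i n, 0 ≤ w i n) (hlam : ∀ i, 0 ≤ lam i)
    {C : ι → ℝ} {α β δ : ℝ} (hC : ∀ i n, w i n ≤ C i * Real.exp (α * n)) (hβ : 0 ≤ β)
    (hlam_j : ∀ i ≠ j, lam i ≤ Real.exp (-β) * lam j) {K : ℕ} {ξ : ι → ℕ}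
    (hξ : ∑ i, ξ i = K) (hξj : (ξ j : ℝ) ≤ (1 - δ) * K) :
    configWeight w lam ξ ≤ (∏ i, C i) * lam j ^ K * Real.exp ((α - β * δ) * K) := by
  set m := ∑ i ∈ Finset.univ.erase j, ξ i
  have hm : (ξ j : ℝ) + m = K := by
    exact_mod_cast (Finset.add_sum_erase _ _ (Finset.mem_univ j)).trans hξ
  have h_exp : Real.exp (-β) ^ m ≤ Real.exp (-(β * δ * K)) := by
    rw [← Real.exp_nat_mul, Real.exp_le_exp]
    nlinarith
  have hC_nonneg : 0 ≤ (∏ i, C i) * Real.exp (α * K) :=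
    mul_nonneg (Finset.prod_nonneg fun i _ => (hw i 0).trans (by simpa using hC i 0))
      (Real.exp_pos _).le
  calc configWeight w lam ξ = (∏ i, w i (ξ i)) * ∏ i, lam i ^ ξ i := Finset.prod_mul_distrib
    _ ≤ ((∏ i, C i) * Real.exp (α * K)) * (lam j ^ K * Real.exp (-β) ^ m) := by
        refine mul_le_mul ?_ ?_ (Finset.prod_nonneg fun i _ => pow_nonneg (hlam i) _) ?_
        · simpa [hξ] using prod_le_prod_mul_exp hw hC ξ
        · simpa [hξ] using prod_pow_le_pow_mul_pow hlam hlam_j ξ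
        · exact hC_nonneg
    _ ≤ ((∏ i, C i) * Real.exp (α * K)) * (lam j ^ K * Real.exp (-(β * δ * K))) :=
        mul_le_mul_of_nonneg_left (mul_le_mul_of_nonneg_left h_exp (pow_nonneg (hlam j) _))
          hC_nonneg
    _ = (∏ i, C i) * lam j ^ K * Real.exp ((α - β * δ) * K) := by
        rw [sub_mul, sub_eq_add_neg, Real.exp_add]
        ring

theorem partitionFnOn_le (hw : ∀ i n, 0 ≤ w i n) (hlam : ∀ i, 0 ≤ lam i)
    {C : ι → ℝ} {α β δ : ℝ} (hC : ∀ i n, w i n ≤ C i * Real.exp (α * n)) (hβ : 0 ≤ β)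
    (hlam_j : ∀ i ≠ j, lam i ≤ Real.exp (-β) * lam j) (K : ℕ) :
    partitionFnOn w lam K {ξ | (ξ j : ℝ) ≤ (1 - δ) * K}
      ≤ ((K : ℝ) + 1) ^ Fintype.card ι * ((∏ i, C i) * lam j ^ K * Real.exp ((α - β * δ) * K)) := by
  have h_card : (Nat.card {ξ : ι → ℕ // ∑ i, ξ i = K ∧ ξ ∈ {ξ | (ξ j : ℝ) ≤ (1 - δ) * K}} : ℝ)
      ≤ ((K : ℝ) + 1) ^ Fintype.card ι := by
    exact_mod_cast natCard_le_of_sum_eq (P := fun ξ : ι → ℕ => ∑ i, ξ i = K ∧ _) fun _ h => h.1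
  have h_bound : 0 ≤ (∏ i, C i) * lam j ^ K * Real.exp ((α - β * δ) * K) :=
    mul_nonneg (mul_nonneg (Finset.prod_nonneg fun i _ => (hw i 0).trans (by simpa using hC i 0))
      (pow_nonneg (hlam j) _)) (Real.exp_pos _).le
  refine (tsum_le_natCard_mul fun ξ => ?_).trans (mul_le_mul_of_nonneg_right h_card h_bound)
  exact configWeight_le_of_apply_le hw hlam hC hβ hlam_j ξ.2.1 ξ.2.2

theorem exists_partitionFnOn_div_le (hw : ∀ i n, 0 < w i n)
    (hsub : ∀ i, Tendsto (fun n : ℕ => w i (n + 1) / w i n) atTop (𝓝 1))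
    (hlam : ∀ i, 0 < lam i) (hj : ∀ i ≠ j, lam i < lam j) {δ : ℝ} (hδ : 0 < δ) :
    ∃ A q : ℝ, 0 ≤ A ∧ 0 < q ∧ q < 1 ∧ ∀ K : ℕ,
      partitionFnOn w lam K {ξ | (ξ j : ℝ) ≤ (1 - δ) * K} / partitionFn w lam K
        ≤ A * (((K : ℝ) + 1) ^ Fintype.card ι * q ^ K) := by
  obtain ⟨β, hβ, hlam_j⟩ := exists_le_exp_neg_mul (hlam j) hj
  have hα : 0 < β * δ / 4 := by positivity
  choose C hC_pos hC using fun i => exists_le_mul_exp_of_tendsto_ratio_one (hw i) (hsub i) hα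
  obtain ⟨c, hc, hcw⟩ := exists_mul_exp_neg_le_of_tendsto_ratio_one (hw j) (hsub j) hα
  set W₀ := ∏ i ∈ Finset.univ.erase j, w i 0
  have hW₀ : 0 < W₀ := Finset.prod_pos fun i _ => hw i 0
  refine ⟨(∏ i, C i) / (c * W₀), Real.exp (-(β * δ / 2)),
    div_nonneg (Finset.prod_nonneg fun i _ => (hC_pos i).le) (by positivity), Real.exp_pos _,
    Real.exp_lt_one_iff.2 (by linarith), fun K => ?_⟩
  have hZ := le_partitionFn hw hlam hcw K
  have hS := partitionFnOn_le (δ := δ) (fun i n => (hw i n).le) (fun i => (hlam i).le) hC hβ.le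
    hlam_j K
  have hZ_pos : 0 < c * Real.exp (-(β * δ / 4 * K)) * lam j ^ K * W₀ := by
    have := hlam j
    positivity
  have h_exp : Real.exp ((β * δ / 4 - β * δ) * K)
      = Real.exp (-(β * δ / 2)) ^ K * Real.exp (-(β * δ / 4 * K)) := by
    rw [← Real.exp_nat_mul, ← Real.exp_add]
    ring_nf
  calc partitionFnOn w lam K {ξ | (ξ j : ℝ) ≤ (1 - δ) * K} / partitionFn w lam K
      ≤ ((K : ℝ) + 1) ^ Fintype.card ι
          * ((∏ i, C i) * lam j ^ K * Real.exp ((β * δ / 4 - β * δ) * K))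
          / (c * Real.exp (-(β * δ / 4 * K)) * lam j ^ K * W₀) :=
        div_le_div₀ (hS.trans' (tsum_nonneg fun ξ => configWeight_nonneg
          (fun i n => (hw i n).le) (fun i => (hlam i).le) ξ)) hS hZ_pos hZ
    _ = (∏ i, C i) / (c * W₀) * (((K : ℝ) + 1) ^ Fintype.card ι * Real.exp (-(β * δ / 2)) ^ K) := by
        have := hlam j
        rw [h_exp]
        field_simp

end Condensation

theorem summable_succ_pow_mul_pow (d : ℕ) {q : ℝ} (hq₀ : 0 < q) (hq₁ : q < 1) :
    Summable fun K : ℕ => ((K : ℝ) + 1) ^ d * q ^ K := by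
  have hq : ‖q‖ < 1 := by rwa [Real.norm_of_nonneg hq₀.le]
  have h := (summable_pow_mul_geometric_of_norm_lt_one d hq).comp_injective (add_left_injective 1)
  refine (h.mul_left q⁻¹).congr fun K => ?_
  simp only [Function.comp_apply, Nat.cast_add, Nat.cast_one, pow_succ]
  field_simp

theorem tendsto_div_self_of_eventually_lt {x : ℕ → ℝ} (hle : ∀ K, x K ≤ K)
    (h : ∀ m : ℕ, ∀ᶠ K in atTop, (1 - 1 / ((m : ℝ) + 1)) * K < x K) :
    Tendsto (fun K => x K / K) atTop (𝓝 1) := by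
  refine tendsto_order.2 ⟨fun a ha => ?_, fun b hb => ?_⟩
  · obtain ⟨m, hm⟩ := exists_nat_one_div_lt (sub_pos.2 ha)
    filter_upwards [h m, eventually_gt_atTop 0] with K hK hK₀
    have hK₀' : (0 : ℝ) < K := Nat.cast_pos.2 hK₀
    rw [lt_div_iff₀ hK₀']
    calc a * K < (1 - 1 / ((m : ℝ) + 1)) * K := by gcongr; linarith
      _ < x K := hK
  · exact Eventually.of_forall fun K => (div_le_one_of_le₀ (hle K) K.cast_nonneg).trans_lt hb

theorem ae_eventually_notMem_of_le_ofReal {Ω : Type*} [MeasurableSpace Ω] {P : Measure Ω}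
    {s : ℕ → Set Ω} {f : ℕ → ℝ} (hf₀ : ∀ n, 0 ≤ f n) (hf : Summable f)
    (h : ∀ n, P (s n) ≤ ENNReal.ofReal (f n)) : ∀ᵐ ω ∂P, ∀ᶠ n in atTop, ω ∉ s n := by
  have h_sum : ∑' n, P (s n) ≤ ENNReal.ofReal (∑' n, f n) := by
    rw [ENNReal.ofReal_tsum_of_nonneg hf₀ hf]
    exact ENNReal.tsum_le_tsum h
  exact ae_eventually_notMem (ne_top_of_le_ne_top ENNReal.ofReal_ne_top h_sum)

section Law

variable {ι : Type*} [Fintype ι] {w : ι → ℕ → ℝ} {lam : ι → ℝ}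
  {Ω : Type*} [MeasurableSpace Ω] {P : Measure Ω}

theorem measure_mem_le_partitionFnOn (hw : ∀ i n, 0 ≤ w i n) (hlam : ∀ i, 0 ≤ lam i)
    {X : Ω → ι → ℕ} {K : ℕ}
    (hX : ∀ s, P {ω | X ω = s} = ENNReal.ofReal
      (if ∑ i, s i = K then configWeight w lam s / partitionFn w lam K else 0))
    (A : Set (ι → ℕ)) :
    P {ω | X ω ∈ A} ≤ ENNReal.ofReal (partitionFnOn w lam K A / partitionFn w lam K) := by
  have hZ : 0 ≤ partitionFn w lam K := tsum_nonneg fun ξ => configWeight_nonneg hw hlam ξ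
  set f : (ι → ℕ) → ENNReal := fun s => ENNReal.ofReal (configWeight w lam s / partitionFn w lam K)
  set B : Set (ι → ℕ) := {ξ | ∑ i, ξ i = K ∧ ξ ∈ A}
  calc P {ω | X ω ∈ A} = P (⋃ s ∈ A, {ω | X ω = s}) := by congr 1; ext; simp
    _ ≤ ∑' s : A, P {ω | X ω = s} := measure_biUnion_le P A.to_countable _
    _ = ∑' s : B, f s := by
        rw [tsum_subtype A fun s => P {ω | X ω = s}, tsum_subtype B f]
        refine tsum_congr fun s => ?_
        simp only [hX, f, B]
        by_cases hs : ∑ i, s i = K <;> by_cases hA : s ∈ A <;> simp [Set.indicator, hs, hA]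
    _ = ENNReal.ofReal (partitionFnOn w lam K A / partitionFn w lam K) := by
        rw [partitionFnOn, ← tsum_div_const, ENNReal.ofReal_tsum_of_nonneg
          (fun ξ => div_nonneg (configWeight_nonneg hw hlam _) hZ) Summable.of_finite]
        rfl

theorem measure_sum_ne_eq_zero (hw : ∀ i n, 0 ≤ w i n) (hlam : ∀ i, 0 ≤ lam i)
    {X : Ω → ι → ℕ} {K : ℕ}
    (hX : ∀ s, P {ω | X ω = s} = ENNReal.ofReal
      (if ∑ i, s i = K then configWeight w lam s / partitionFn w lam K else 0)) :
    P {ω | ∑ i, X ω i ≠ K} = 0 := by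
  have h_empty : partitionFnOn w lam K {s | ∑ i, s i ≠ K} = 0 := by
    have : IsEmpty {ξ : ι → ℕ // ∑ i, ξ i = K ∧ ξ ∈ {s : ι → ℕ | ∑ i, s i ≠ K}} :=
      ⟨fun ξ => ξ.2.2 ξ.2.1⟩
    exact tsum_empty
  simpa [h_empty] using measure_mem_le_partitionFnOn hw hlam hX {s | ∑ i, s i ≠ K}

variable [DecidableEq ι] {j : ι}

theorem tendsto_partitionFnOn_div (hw : ∀ i n, 0 < w i n)
    (hsub : ∀ i, Tendsto (fun n : ℕ => w i (n + 1) / w i n) atTop (𝓝 1))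
    (hlam : ∀ i, 0 < lam i) (hj : ∀ i ≠ j, lam i < lam j) {δ : ℝ} (hδ : 0 < δ) :
    Tendsto (fun K : ℕ => partitionFnOn w lam K {ξ | (ξ j : ℝ) ≤ (1 - δ) * K}
      / partitionFn w lam K) atTop (𝓝 0) := by
  obtain ⟨A, q, -, hq₀, hq₁, hbound⟩ := exists_partitionFnOn_div_le hw hsub hlam hj hδ
  have h_nonneg := configWeight_nonneg (fun i n => (hw i n).le) fun i => (hlam i).le
  refine squeeze_zero (fun K => div_nonneg (tsum_nonneg fun _ => h_nonneg _)
    (tsum_nonneg fun _ => h_nonneg _)) hbound ?_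
  simpa using ((summable_succ_pow_mul_pow _ hq₀ hq₁).tendsto_atTop_zero).const_mul A

theorem ae_eventually_lt_apply (hw : ∀ i n, 0 < w i n)
    (hsub : ∀ i, Tendsto (fun n : ℕ => w i (n + 1) / w i n) atTop (𝓝 1))
    (hlam : ∀ i, 0 < lam i) (hj : ∀ i ≠ j, lam i < lam j) {X : ℕ → Ω → ι → ℕ}
    (hX : ∀ K s, P {ω | X K ω = s} = ENNReal.ofReal
      (if ∑ i, s i = K then configWeight w lam s / partitionFn w lam K else 0))
    {δ : ℝ} (hδ : 0 < δ) :
    ∀ᵐ ω ∂P, ∀ᶠ K in atTop, (1 - δ) * K < X K ω j := by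
  obtain ⟨A, q, hA, hq₀, hq₁, hbound⟩ := exists_partitionFnOn_div_le hw hsub hlam hj hδ
  have h_law K := measure_mem_le_partitionFnOn (fun i n => (hw i n).le) (fun i => (hlam i).le)
    (hX K) {ξ | (ξ j : ℝ) ≤ (1 - δ) * K}
  have h_bad := ae_eventually_notMem_of_le_ofReal (fun K => mul_nonneg hA (by positivity))
    ((summable_succ_pow_mul_pow _ hq₀ hq₁).mul_left A)
    fun K => (h_law K).trans (ENNReal.ofReal_le_ofReal (hbound K))
  filter_upwards [h_bad] with ω hω
  filter_upwards [hω] with K hK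
  simpa using hK

theorem ae_tendsto_apply_div (hw : ∀ i n, 0 < w i n)
    (hsub : ∀ i, Tendsto (fun n : ℕ => w i (n + 1) / w i n) atTop (𝓝 1))
    (hlam : ∀ i, 0 < lam i) (hj : ∀ i ≠ j, lam i < lam j) {X : ℕ → Ω → ι → ℕ}
    (hX : ∀ K s, P {ω | X K ω = s} = ENNReal.ofReal
      (if ∑ i, s i = K then configWeight w lam s / partitionFn w lam K else 0)) :
    ∀ᵐ ω ∂P, Tendsto (fun K : ℕ => (X K ω j : ℝ) / K) atTop (𝓝 1) := by
  have h_sum : ∀ᵐ ω ∂P, ∀ K, ∑ i, X K ω i = K := ae_all_iff.2 fun K =>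
    measure_sum_ne_eq_zero (fun i n => (hw i n).le) (fun i => (hlam i).le) (hX K)
  have h_low : ∀ᵐ ω ∂P, ∀ m : ℕ, ∀ᶠ K in atTop, (1 - 1 / ((m : ℝ) + 1)) * K < X K ω j :=
    ae_all_iff.2 fun m => ae_eventually_lt_apply hw hsub hlam hj hX (by positivity)
  filter_upwards [h_sum, h_low] with ω hω_sum hω_low
  exact tendsto_div_self_of_eventually_lt (fun K => by exact_mod_cast le_of_sum_eq (hω_sum K) j)
    hω_low

end Law

/-- **General condensation result for conditioned independent random variables, part b)**:
for subexponential weights `w_i` and `λ_N > max_{i<N} λ_i`, under the conditioned measure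
`μ^K(η) ∝ ∏_i w_i(η_i) λ_i^{η_i}` on `{∑_i η_i = K}`, for every `δ ∈ (0,1)` one has
`μ^K(η_N ≤ (1−δ)K) → 0` as `K → ∞`; moreover for random variables `η^K` with law `μ^K`
on a common probability space, `η^K_N / K → 1` almost surely. -/
theorem general_condensation_condensate_site
    (N : ℕ) (hN : 2 ≤ N)
    (lam : Fin N → ℝ) (hlam : ∀ i, 0 < lam i)
    (hmax : ∀ i : Fin N, (i : ℕ) + 1 < N → lam i < lam ⟨N - 1, by omega⟩)
    (w : Fin N → ℕ → ℝ) (hw : ∀ i n, 0 < w i n)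
    (hsub : ∀ i, Tendsto (fun n : ℕ => w i (n + 1) / w i n) atTop (𝓝 1))
    {Ω : Type*} [MeasurableSpace Ω] (P : Measure Ω)
    (η : ℕ → Ω → (Fin N → ℕ))
    (hlaw : ∀ K : ℕ, ∀ s : Fin N → ℕ,
      P {ω | η K ω = s} =
        ENNReal.ofReal
          (if ∑ i, s i = K then
            (∏ i, w i (s i) * lam i ^ (s i)) /
              (∑' ξ : {ξ : Fin N → ℕ // ∑ i, ξ i = K}, ∏ i, w i (ξ.1 i) * lam i ^ (ξ.1 i))
          else 0)) :
    (∀ δ ∈ Set.Ioo (0 : ℝ) 1,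
      Tendsto
        (fun K : ℕ =>
          (∑' ξ : {ξ : Fin N → ℕ //
              (∑ i, ξ i = K) ∧ ((ξ ⟨N - 1, by omega⟩ : ℕ) : ℝ) ≤ (1 - δ) * K},
            ∏ i, w i (ξ.1 i) * lam i ^ (ξ.1 i)) /
          (∑' ξ : {ξ : Fin N → ℕ // ∑ i, ξ i = K},
            ∏ i, w i (ξ.1 i) * lam i ^ (ξ.1 i)))
        atTop (𝓝 0)) ∧
    (∀ᵐ ω ∂P,
      Tendsto (fun K : ℕ => ((η K ω ⟨N - 1, by omega⟩ : ℕ) : ℝ) / K) atTop (𝓝 1)) := by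
  set j : Fin N := ⟨N - 1, by omega⟩
  have hj : ∀ i ≠ j, lam i < lam j := fun i hi =>
    hmax i (by have := i.isLt; have : (i : ℕ) ≠ N - 1 := Fin.val_ne_of_ne hi; omega)
  exact ⟨fun δ hδ => tendsto_partitionFnOn_div hw hsub hlam hj hδ.1,
    ae_tendsto_apply_div hw hsub hlam hj hlaw⟩
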